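/- arXiv:1804.06950 — 3 statements merged into one kernel-verified Lean document; each statement's English description precedes it below -/
import Mathlib

section
/- For a Lie group G with Lie algebra 𝔤, the derivative of the exponential map at X ∈ 𝔤 satisfies T_X exp = T_e L_{exp(X)} ∘ φ(ad_X), where φ(x) = (1 - e^{-x})/x = Σ_{n≥0} (-1)^n x^n/(n+1)! and L_q denotes left translation by q. -/
open NormedSpace ContinuousLinearMap Finset

section Comb

/-- Binomial-type identity for commuting elements of a ring. -/
theorem sum_choose_identity {M : Type*} [Ring M] {x z : M} (h : Commute x z) (k : ℕ) :
    ∑ m ∈ range (k+1), x ^ m * z ^ (k - m) * ((k+1).choose m : M)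
      = ∑ i ∈ range (k+1), x ^ i * (x + z) ^ (k - i) := by
  induction k with
  | zero => simp
  | succ k ih =>
    have hrhs : ∑ i ∈ range (k+2), x ^ i * (x + z) ^ (k + 1 - i)
        = x * (∑ i ∈ range (k+1), x ^ i * (x + z) ^ (k - i)) + (x + z) ^ (k+1) := by
      rw [Finset.sum_range_succ' (fun i => x ^ i * (x + z) ^ (k + 1 - i)) (k+1)]
      simp only [pow_zero, one_mul, Nat.sub_zero, Nat.succ_sub_succ, pow_succ']
      rw [Finset.mul_sum]
      ring_nf
      simp [mul_assoc]
    have hlhs : ∑ m ∈ range (k+2), x ^ m * z ^ (k + 1 - m) * ((k+2).choose m : M)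
        = x * (∑ m ∈ range (k+1), x ^ m * z ^ (k - m) * ((k+1).choose m : M))
          + ∑ m ∈ range (k+2), x ^ m * z ^ (k + 1 - m) * ((k+1).choose m : M) := by
      rw [Finset.sum_range_succ' (fun m => x ^ m * z ^ (k + 1 - m) * ((k+2).choose m : M)) (k+1),
        Finset.sum_range_succ' (fun m => x ^ m * z ^ (k + 1 - m) * ((k+1).choose m : M)) (k+1)]
      simp only [Nat.succ_sub_succ, Nat.choose_zero_right, Nat.cast_one, pow_zero, one_mul,
        Nat.sub_zero, mul_one]
      rw [Finset.mul_sum, ← add_assoc, ← Finset.sum_add_distrib]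
      congr 1
      apply Finset.sum_congr rfl
      intro m hm
      have : ((k+2).choose (m+1) : M) = ((k+1).choose m : M) + ((k+1).choose (m+1) : M) := by
        rw [← Nat.cast_add, ← Nat.choose_succ_succ]
      rw [this, mul_add, pow_succ']
      ring_nf
      simp [mul_assoc]
    rw [hlhs, hrhs, ih, ← Commute.add_pow h (k+1)]
end Comb

section Main
set_option linter.unusedSectionVars false
set_option synthInstance.maxHeartbeats 1000000
set_option maxHeartbeats 1000000
variable {A : Type*} [NormedRing A] [NormedAlgebra ℝ A] [CompleteSpace A]

lemma pow_norm_le {M : Type*} [NormedRing M] (x : M) (h1 : ‖(1:M)‖ ≤ 1) (n : ℕ) :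
    ‖x ^ n‖ ≤ ‖x‖ ^ n := by
  cases n with
  | zero => simpa using h1
  | succ n => exact norm_pow_le' x n.succ_pos

lemma mulL_pow_apply (X h : A) (n : ℕ) : ((mul ℝ A X) ^ n) h = X ^ n * h := by
  induction n with
  | zero => simp
  | succ n ih => rw [pow_succ', pow_succ', ContinuousLinearMap.mul_apply, ih]
                 simp [mul_assoc]

lemma mulR_pow_apply (X h : A) (n : ℕ) : (((mul ℝ A).flip X) ^ n) h = h * X ^ n := by
  induction n generalizing h with
  | zero => simp
  | succ n ih =>
      rw [pow_succ, ContinuousLinearMap.mul_apply, ih]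
      simp [pow_succ', mul_assoc]

lemma norm_mulL_le (X : A) : ‖(mul ℝ A X : A →L[ℝ] A)‖ ≤ ‖X‖ := opNorm_mul_apply_le ℝ A X

lemma norm_mulR_le (X : A) : ‖((mul ℝ A).flip X : A →L[ℝ] A)‖ ≤ ‖X‖ := by
  refine opNorm_le_bound _ (norm_nonneg X) fun h => ?_
  simp only [flip_apply, ContinuousLinearMap.mul_apply']
  calc ‖h * X‖ ≤ ‖h‖ * ‖X‖ := norm_mul_le _ _
  _ = ‖X‖ * ‖h‖ := mul_comm _ _

lemma commute_LR (X : A) : Commute (mul ℝ A X : A →L[ℝ] A) ((mul ℝ A).flip X) := by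
  apply ContinuousLinearMap.ext
  intro h
  simp only [ContinuousLinearMap.mul_apply, flip_apply, ContinuousLinearMap.mul_apply', mul_assoc]

lemma mul_pow_eq (X : A) (m : ℕ) : mul ℝ A (X ^ m) = (mul ℝ A X : A →L[ℝ] A) ^ m := by
  ext h
  rw [mulL_pow_apply, ContinuousLinearMap.mul_apply']

lemma summable_norm_aL (X : A) :
    Summable fun m : ℕ => ‖((m.factorial : ℝ)⁻¹) • ((mul ℝ A X : A →L[ℝ] A) ^ m)‖ := by
  apply Summable.of_nonneg_of_le (fun m => norm_nonneg _)
    (fun m => ?_) (Real.summable_pow_div_factorial ‖X‖)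
  rw [norm_smul ((m.factorial : ℝ)⁻¹) (((mul ℝ A X : A →L[ℝ] A)) ^ m)]
  have h1 : ‖((mul ℝ A X : A →L[ℝ] A)) ^ m‖ ≤ ‖X‖ ^ m := by
    calc ‖((mul ℝ A X : A →L[ℝ] A)) ^ m‖ ≤ ‖(mul ℝ A X : A →L[ℝ] A)‖ ^ m :=
          pow_norm_le _ norm_id_le m
    _ ≤ ‖X‖ ^ m := pow_le_pow_left₀ (norm_nonneg _) (norm_mulL_le X) m
  have h2 : ‖((m.factorial : ℝ)⁻¹)‖ = ((m.factorial : ℝ))⁻¹ := by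
    rw [Real.norm_eq_abs, abs_of_nonneg]
    positivity
  rw [h2, div_eq_inv_mul]
  exact mul_le_mul_of_nonneg_left h1 (by positivity)

lemma summable_norm_bZ (X : A) :
    Summable fun n : ℕ => ‖(((n+1).factorial : ℝ)⁻¹) •
      (((mul ℝ A).flip X - mul ℝ A X : A →L[ℝ] A) ^ n)‖ := by
  set z : A →L[ℝ] A := (mul ℝ A).flip X - mul ℝ A X with hz
  apply Summable.of_nonneg_of_le (fun m => norm_nonneg _)
    (fun n => ?_) (Real.summable_pow_div_factorial ‖z‖)
  rw [norm_smul]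
  have h1 : ‖z ^ n‖ ≤ ‖z‖ ^ n := pow_norm_le _ norm_id_le n
  have h2 : ‖(((n+1).factorial : ℝ)⁻¹)‖ ≤ ((n.factorial : ℝ))⁻¹ := by
    rw [Real.norm_eq_abs, abs_of_nonneg (by positivity)]
    apply inv_anti₀ (by positivity)
    exact_mod_cast Nat.factorial_le (Nat.le_succ n)
  calc ‖(((n+1).factorial : ℝ)⁻¹)‖ * ‖z ^ n‖ ≤ ((n.factorial : ℝ))⁻¹ * ‖z‖ ^ n :=
        mul_le_mul h2 h1 (norm_nonneg _) (by positivity)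
  _ = ‖z‖ ^ n / n.factorial := by rw [div_eq_inv_mul]

lemma summable_norm_T (X : A) :
    Summable fun k : ℕ => ‖(((k+1).factorial : ℝ)⁻¹) •
      ∑ i ∈ range (k+1), ((mul ℝ A X : A →L[ℝ] A)) ^ i * ((mul ℝ A).flip X) ^ (k - i)‖ := by
  apply Summable.of_nonneg_of_le (fun m => norm_nonneg _)
    (fun k => ?_) (Real.summable_pow_div_factorial ‖X‖)
  rw [norm_smul (((k+1).factorial : ℝ)⁻¹)
    (∑ i ∈ range (k+1), ((mul ℝ A X : A →L[ℝ] A)) ^ i * ((mul ℝ A).flip X) ^ (k - i))]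
  have hL : ∀ i : ℕ, ‖((mul ℝ A X : A →L[ℝ] A)) ^ i‖ ≤ ‖X‖ ^ i := fun i => by
    calc ‖((mul ℝ A X : A →L[ℝ] A)) ^ i‖ ≤ ‖(mul ℝ A X : A →L[ℝ] A)‖ ^ i :=
          pow_norm_le _ norm_id_le i
    _ ≤ ‖X‖ ^ i := pow_le_pow_left₀ (norm_nonneg _) (norm_mulL_le X) i
  have hR : ∀ i : ℕ, ‖(((mul ℝ A).flip X : A →L[ℝ] A)) ^ i‖ ≤ ‖X‖ ^ i := fun i => by
    calc ‖(((mul ℝ A).flip X : A →L[ℝ] A)) ^ i‖ ≤ ‖((mul ℝ A).flip X : A →L[ℝ] A)‖ ^ i :=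
          pow_norm_le _ norm_id_le i
    _ ≤ ‖X‖ ^ i := pow_le_pow_left₀ (norm_nonneg _) (norm_mulR_le X) i
  have h1 : ‖∑ i ∈ range (k+1), ((mul ℝ A X : A →L[ℝ] A)) ^ i * ((mul ℝ A).flip X) ^ (k - i)‖
      ≤ (k+1) * ‖X‖ ^ k := by
    calc ‖∑ i ∈ range (k+1), ((mul ℝ A X : A →L[ℝ] A)) ^ i * ((mul ℝ A).flip X) ^ (k - i)‖
        ≤ ∑ i ∈ range (k+1), ‖((mul ℝ A X : A →L[ℝ] A)) ^ i * ((mul ℝ A).flip X) ^ (k - i)‖ :=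
          norm_sum_le _ _
      _ ≤ ∑ i ∈ range (k+1), ‖X‖ ^ k := by
          apply Finset.sum_le_sum
          intro i hi
          have hik : i ≤ k := Nat.lt_succ_iff.mp (Finset.mem_range.mp hi)
          calc ‖((mul ℝ A X : A →L[ℝ] A)) ^ i * ((mul ℝ A).flip X) ^ (k - i)‖
              ≤ ‖((mul ℝ A X : A →L[ℝ] A)) ^ i‖ * ‖(((mul ℝ A).flip X : A →L[ℝ] A)) ^ (k - i)‖ :=
                norm_mul_le _ _
            _ ≤ ‖X‖ ^ i * ‖X‖ ^ (k - i) :=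
                mul_le_mul (hL i) (hR (k - i)) (norm_nonneg _) (by positivity)
            _ = ‖X‖ ^ k := by rw [← pow_add, Nat.add_sub_cancel' hik]
      _ = (k+1) * ‖X‖ ^ k := by
          rw [Finset.sum_const, Finset.card_range, nsmul_eq_mul]
          push_cast; ring
  have h2 : ‖(((k+1).factorial : ℝ)⁻¹)‖ = (((k+1).factorial : ℝ))⁻¹ := by
    rw [Real.norm_eq_abs, abs_of_nonneg]; positivity
  rw [h2]
  calc (((k+1).factorial : ℝ))⁻¹ *
      ‖∑ i ∈ range (k+1), ((mul ℝ A X : A →L[ℝ] A)) ^ i * ((mul ℝ A).flip X) ^ (k - i)‖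
      ≤ (((k+1).factorial : ℝ))⁻¹ * ((k+1) * ‖X‖ ^ k) :=
        mul_le_mul_of_nonneg_left h1 (by positivity)
    _ = ‖X‖ ^ k / k.factorial := by
        rw [Nat.factorial_succ]
        push_cast
        rw [mul_inv]
        field_simp

lemma partB (X : A) :
    (mul ℝ A (exp X)).comp (∑' n : ℕ, (((-1:ℝ)^n / ((n+1).factorial : ℝ)) •
        ((mul ℝ A X : A →L[ℝ] A) - (mul ℝ A).flip X) ^ n))
      = ∑' k : ℕ, (((k+1).factorial : ℝ)⁻¹) •
          ∑ i ∈ range (k+1), ((mul ℝ A X : A →L[ℝ] A)) ^ i * ((mul ℝ A).flip X) ^ (k - i) := by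
  have hsummand : ∀ n : ℕ, (((-1:ℝ)^n / ((n+1).factorial : ℝ)) •
      ((mul ℝ A X : A →L[ℝ] A) - (mul ℝ A).flip X) ^ n)
      = (((n+1).factorial : ℝ)⁻¹) • (((mul ℝ A).flip X - mul ℝ A X : A →L[ℝ] A) ^ n) := by
    intro n
    have h1 : ((mul ℝ A).flip X - mul ℝ A X : A →L[ℝ] A)
        = (-1:ℝ) • ((mul ℝ A X : A →L[ℝ] A) - (mul ℝ A).flip X) := by
      rw [neg_one_smul, neg_sub]
    rw [h1, smul_pow, smul_smul]
    congr 1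
    rw [div_eq_mul_inv, mul_comm]
  rw [tsum_congr hsummand]
  have hexp : mul ℝ A (exp X)
      = ∑' m : ℕ, ((m.factorial : ℝ)⁻¹) • ((mul ℝ A X : A →L[ℝ] A)) ^ m := by
    rw [exp_eq_tsum ℝ, ContinuousLinearMap.map_tsum (mul ℝ A) (expSeries_summable' (𝕂 := ℝ) X)]
    refine tsum_congr fun m => ?_
    rw [map_smul, mul_pow_eq]
  rw [← ContinuousLinearMap.mul_def, hexp,
    tsum_mul_tsum_eq_tsum_sum_range_of_summable_norm (summable_norm_aL X) (summable_norm_bZ X)]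
  refine tsum_congr fun k => ?_
  have hcomm : Commute (mul ℝ A X : A →L[ℝ] A) ((mul ℝ A).flip X - mul ℝ A X) :=
    (commute_LR X).sub_right (Commute.refl _)
  have hid := sum_choose_identity hcomm k
  rw [add_sub_cancel] at hid
  rw [← hid, Finset.smul_sum]
  apply Finset.sum_congr rfl
  intro m hm
  have hmk : m ≤ k := Nat.lt_succ_iff.mp (Finset.mem_range.mp hm)
  rw [smul_mul_smul]
  have hC : ((((k+1).choose m : ℕ)) : A →L[ℝ] A)
      = (((k+1).choose m : ℝ)) • (1 : A →L[ℝ] A) := by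
    rw [← map_natCast (algebraMap ℝ (A →L[ℝ] A)), Algebra.algebraMap_eq_smul_one]
  rw [hC, mul_smul_comm, smul_smul, mul_one]
  congr 1
  have h1 : ((k+1).choose m : ℝ)
      = ((k+1).factorial : ℝ) / ((m.factorial : ℝ) * ((k+1-m).factorial : ℝ)) := by
    exact_mod_cast Nat.cast_choose ℝ (le_trans hmk (Nat.le_succ k))
  have h2 : k + 1 - m = (k - m) + 1 := by omega
  rw [h1, h2]
  have f1 : (m.factorial : ℝ) ≠ 0 := Nat.cast_ne_zero.mpr (Nat.factorial_ne_zero m)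
  have f2 : (((k-m)+1).factorial : ℝ) ≠ 0 := Nat.cast_ne_zero.mpr (Nat.factorial_ne_zero _)
  have f3 : ((k+1).factorial : ℝ) ≠ 0 := Nat.cast_ne_zero.mpr (Nat.factorial_ne_zero _)
  field_simp

/-- Gateaux-derivative term of `x ^ n`. -/
def Dterm (X h : A) (n : ℕ) : A := ∑ i ∈ Finset.range n, X ^ i * h * X ^ (n - 1 - i)

/-- Second-order error term of `x ^ n`. -/
def Eterm (X h : A) (n : ℕ) : A := (X + h) ^ n - X ^ n - Dterm X h n

lemma Dterm_zero (X h : A) : Dterm X h 0 = 0 := by simp [Dterm]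

lemma Dterm_succ (X h : A) (n : ℕ) :
    Dterm X h (n+1) = X * Dterm X h n + h * X ^ n := by
  unfold Dterm
  have hs : ∀ i, n + 1 - 1 - i = n - i := fun i => by omega
  simp only [hs]
  rw [Finset.sum_range_succ' (fun i => X ^ i * h * X ^ (n - i)) n]
  simp only [pow_zero, one_mul, Nat.sub_zero]
  rw [Finset.mul_sum]
  congr 1
  apply Finset.sum_congr rfl
  intro i hi
  have h2 : n - (i+1) = n - 1 - i := by omega
  rw [h2, pow_succ']
  simp [mul_assoc]

lemma Eterm_zero (X h : A) : Eterm X h 0 = 0 := by simp [Eterm, Dterm]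

lemma Eterm_succ (X h : A) (n : ℕ) :
    Eterm X h (n+1) = h * Dterm X h n + (X + h) * Eterm X h n := by
  have hP : (X + h) ^ n = X ^ n + Dterm X h n + Eterm X h n := by
    unfold Eterm; abel
  unfold Eterm
  rw [Dterm_succ, pow_succ' (X+h) n, hP, pow_succ' X n]
  noncomm_ring

lemma norm_pow_le_kappa (X : A) (i : ℕ) : ‖X ^ i‖ ≤ (max ‖(1:A)‖ 1) * ‖X‖ ^ i := by
  cases i with
  | zero => simpa using le_max_left ‖(1:A)‖ 1
  | succ i =>
      calc ‖X ^ (i+1)‖ ≤ ‖X‖ ^ (i+1) := norm_pow_le' X i.succ_pos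
      _ ≤ (max ‖(1:A)‖ 1) * ‖X‖ ^ (i+1) := by
          nlinarith [le_max_right ‖(1:A)‖ 1, pow_nonneg (norm_nonneg X) (i+1)]

lemma Dterm_norm (X h : A) (n : ℕ) :
    ‖Dterm X h n‖ ≤ n * ((max ‖(1:A)‖ 1)^2 * ‖h‖ * (‖X‖ + 2) ^ n) := by
  set κ := max ‖(1:A)‖ 1 with hκ
  have hκ1 : (1:ℝ) ≤ κ := le_max_right _ _
  have hκ0 : (0:ℝ) ≤ κ := by linarith
  set r := ‖X‖ with hr
  have hr0 : (0:ℝ) ≤ r := norm_nonneg X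
  have hρ1 : (1:ℝ) ≤ r + 2 := by linarith
  calc ‖Dterm X h n‖ ≤ ∑ i ∈ Finset.range n, ‖X ^ i * h * X ^ (n - 1 - i)‖ :=
        norm_sum_le _ _
  _ ≤ ∑ i ∈ Finset.range n, κ^2 * ‖h‖ * (r + 2) ^ n := by
      apply Finset.sum_le_sum
      intro i hi
      have hin : i < n := Finset.mem_range.mp hi
      have e1 : ‖X ^ i * h * X ^ (n - 1 - i)‖ ≤ (κ * r ^ i) * ‖h‖ * (κ * r ^ (n - 1 - i)) := by
        calc ‖X ^ i * h * X ^ (n - 1 - i)‖ ≤ ‖X ^ i * h‖ * ‖X ^ (n - 1 - i)‖ := norm_mul_le _ _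
        _ ≤ (‖X ^ i‖ * ‖h‖) * ‖X ^ (n - 1 - i)‖ := by
            apply mul_le_mul_of_nonneg_right (norm_mul_le _ _) (norm_nonneg _)
        _ ≤ ((κ * r ^ i) * ‖h‖) * (κ * r ^ (n - 1 - i)) := by
            apply mul_le_mul
            · exact mul_le_mul_of_nonneg_right (norm_pow_le_kappa X i) (norm_nonneg h)
            · exact norm_pow_le_kappa X _
            · exact norm_nonneg _
            · positivity
      have e2 : r ^ i * r ^ (n - 1 - i) ≤ (r + 2) ^ n := by
        rw [← pow_add]
        calc r ^ (i + (n - 1 - i)) ≤ (r + 2) ^ (i + (n - 1 - i)) := by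
              apply pow_le_pow_left₀ hr0 (by linarith)
        _ ≤ (r + 2) ^ n := by
              apply pow_le_pow_right₀ hρ1
              omega
      calc ‖X ^ i * h * X ^ (n - 1 - i)‖ ≤ (κ * r ^ i) * ‖h‖ * (κ * r ^ (n - 1 - i)) := e1
      _ = κ^2 * ‖h‖ * (r ^ i * r ^ (n - 1 - i)) := by ring
      _ ≤ κ^2 * ‖h‖ * (r + 2) ^ n := by
          apply mul_le_mul_of_nonneg_left e2 (by positivity)
  _ = n * (κ^2 * ‖h‖ * (r + 2) ^ n) := by
      rw [Finset.sum_const, Finset.card_range, nsmul_eq_mul]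

lemma Eterm_norm (X h : A) (hh : ‖h‖ ≤ 1) (n : ℕ) :
    ‖Eterm X h n‖ ≤ (max ‖(1:A)‖ 1)^2 * ((n:ℝ)^2 * (‖X‖ + 2) ^ n) * ‖h‖^2 := by
  set κ := max ‖(1:A)‖ 1 with hκ
  have hκ1 : (1:ℝ) ≤ κ := le_max_right _ _
  set r := ‖X‖ with hr
  have hr0 : (0:ℝ) ≤ r := norm_nonneg X
  induction n with
  | zero => simp [Eterm_zero]
  | succ n ih =>
      have hρn : (0:ℝ) ≤ (r + 2) ^ n := by positivity
      have hh0 : (0:ℝ) ≤ ‖h‖ := norm_nonneg h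
      calc ‖Eterm X h (n+1)‖ = ‖h * Dterm X h n + (X + h) * Eterm X h n‖ := by
            rw [Eterm_succ]
      _ ≤ ‖h * Dterm X h n‖ + ‖(X + h) * Eterm X h n‖ := norm_add_le _ _
      _ ≤ ‖h‖ * ‖Dterm X h n‖ + ‖X + h‖ * ‖Eterm X h n‖ := by
            exact add_le_add (norm_mul_le _ _) (norm_mul_le _ _)
      _ ≤ ‖h‖ * (n * (κ^2 * ‖h‖ * (r + 2) ^ n))
            + (r + 1) * (κ^2 * ((n:ℝ)^2 * (r + 2) ^ n) * ‖h‖^2) := by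
            apply add_le_add
            · exact mul_le_mul_of_nonneg_left (Dterm_norm X h n) hh0
            · have hXh : ‖X + h‖ ≤ r + 1 := by
                calc ‖X + h‖ ≤ ‖X‖ + ‖h‖ := norm_add_le _ _
                _ ≤ r + 1 := by rw [← hr]; linarith
              calc ‖X + h‖ * ‖Eterm X h n‖ ≤ (r + 1) * ‖Eterm X h n‖ :=
                    mul_le_mul_of_nonneg_right hXh (norm_nonneg _)
              _ ≤ (r + 1) * (κ^2 * ((n:ℝ)^2 * (r + 2) ^ n) * ‖h‖^2) :=
                    mul_le_mul_of_nonneg_left ih (by linarith)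
      _ ≤ κ^2 * (((n:ℝ)+1)^2 * (r + 2) ^ (n+1)) * ‖h‖^2 := by
            have key : (n:ℝ) + (r+1)*(n:ℝ)^2 ≤ (r+2)*((n:ℝ)+1)^2 := by
              nlinarith [hr0, sq_nonneg ((n:ℝ)), (Nat.cast_nonneg n : (0:ℝ) ≤ (n:ℝ))]
            have e1 : ‖h‖ * ((n:ℝ) * (κ^2*‖h‖*(r+2)^n)) + (r+1)*(κ^2*((n:ℝ)^2*(r+2)^n)*‖h‖^2)
                = (κ^2*(r+2)^n*‖h‖^2) * ((n:ℝ) + (r+1)*(n:ℝ)^2) := by ring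
            have e2 : κ^2 * (((n:ℝ)+1)^2 * (r + 2) ^ (n+1)) * ‖h‖^2
                = (κ^2*(r+2)^n*‖h‖^2) * ((r+2)*((n:ℝ)+1)^2) := by rw [pow_succ]; ring
            rw [e1, e2]
            exact mul_le_mul_of_nonneg_left key (by positivity)
      _ = κ^2 * (((n:ℝ)+1)^2 * (r + 2) ^ (n+1)) * ‖h‖^2 := rfl
      _ = κ^2 * ((((n+1):ℕ):ℝ)^2 * (r + 2) ^ (n+1)) * ‖h‖^2 := by push_cast; ring

lemma cast_le_two_pow (n : ℕ) : (n:ℝ) ≤ 2 ^ n := by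
  exact_mod_cast (Nat.lt_two_pow_self (n := n)).le

lemma sq_cast_le_four_pow (n : ℕ) : (n:ℝ)^2 ≤ 4 ^ n := by
  calc (n:ℝ)^2 ≤ ((2:ℝ)^n)^2 :=
        pow_le_pow_left₀ (Nat.cast_nonneg n) (cast_le_two_pow n) 2
  _ = 4 ^ n := by rw [← pow_mul, mul_comm, pow_mul]; norm_num

lemma summable_norm_D (X h : A) :
    Summable fun n : ℕ => ‖((n.factorial : ℝ)⁻¹) • Dterm X h n‖ := by
  set κ := max ‖(1:A)‖ 1 with hκ
  have hκ1 : (1:ℝ) ≤ κ := le_max_right _ _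
  apply Summable.of_nonneg_of_le (fun n => norm_nonneg _) (fun n => ?_)
    (((Real.summable_pow_div_factorial (2*(‖X‖+2))).mul_left (κ^2 * ‖h‖)))
  rw [norm_smul, Real.norm_eq_abs, abs_of_nonneg (by positivity)]
  calc ((n.factorial : ℝ))⁻¹ * ‖Dterm X h n‖
      ≤ ((n.factorial : ℝ))⁻¹ * (n * (κ^2 * ‖h‖ * (‖X‖ + 2) ^ n)) := by
        exact mul_le_mul_of_nonneg_left (Dterm_norm X h n) (by positivity)
  _ ≤ ((n.factorial : ℝ))⁻¹ * (2^n * (κ^2 * ‖h‖ * (‖X‖ + 2) ^ n)) := by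
        apply mul_le_mul_of_nonneg_left _ (by positivity)
        exact mul_le_mul_of_nonneg_right (cast_le_two_pow n) (by positivity)
  _ = κ^2 * ‖h‖ * ((2*(‖X‖+2)) ^ n / n.factorial) := by
        rw [mul_pow]; field_simp

lemma summable_norm_E (X h : A) (hh : ‖h‖ ≤ 1) :
    Summable fun n : ℕ => ‖((n.factorial : ℝ)⁻¹) • Eterm X h n‖ := by
  set κ := max ‖(1:A)‖ 1 with hκ
  have hκ1 : (1:ℝ) ≤ κ := le_max_right _ _
  apply Summable.of_nonneg_of_le (fun n => norm_nonneg _) (fun n => ?_)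
    (((Real.summable_pow_div_factorial (4*(‖X‖+2))).mul_left (κ^2 * ‖h‖^2)))
  rw [norm_smul, Real.norm_eq_abs, abs_of_nonneg (by positivity)]
  calc ((n.factorial : ℝ))⁻¹ * ‖Eterm X h n‖
      ≤ ((n.factorial : ℝ))⁻¹ * (κ^2 * ((n:ℝ)^2 * (‖X‖ + 2) ^ n) * ‖h‖^2) := by
        exact mul_le_mul_of_nonneg_left (Eterm_norm X h hh n) (by positivity)
  _ ≤ ((n.factorial : ℝ))⁻¹ * (κ^2 * ((4:ℝ)^n * (‖X‖ + 2) ^ n) * ‖h‖^2) := by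
        apply mul_le_mul_of_nonneg_left _ (by positivity)
        apply mul_le_mul_of_nonneg_right _ (by positivity)
        apply mul_le_mul_of_nonneg_left _ (by positivity)
        exact mul_le_mul_of_nonneg_right (sq_cast_le_four_pow n) (by positivity)
  _ = κ^2 * ‖h‖^2 * ((4*(‖X‖+2)) ^ n / n.factorial) := by
        rw [mul_pow]; field_simp

lemma key_eq (X h : A) :
    exp (X + h) - exp X
      - (∑' k : ℕ, (((k+1).factorial : ℝ)⁻¹) •
          ∑ i ∈ range (k+1), ((mul ℝ A X : A →L[ℝ] A)) ^ i * ((mul ℝ A).flip X) ^ (k - i)) h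
      = ∑' n : ℕ, ((n.factorial : ℝ)⁻¹) • Eterm X h n := by
  have hTapp : (∑' k : ℕ, (((k+1).factorial : ℝ)⁻¹) •
        ∑ i ∈ range (k+1), ((mul ℝ A X : A →L[ℝ] A)) ^ i * ((mul ℝ A).flip X) ^ (k - i)) h
      = ∑' k : ℕ, (((k+1).factorial : ℝ)⁻¹) • Dterm X h (k+1) := by
    have := ContinuousLinearMap.map_tsum (ContinuousLinearMap.apply ℝ A h)
      (summable_norm_T X).of_norm
    rw [ContinuousLinearMap.apply_apply] at this
    rw [this]
    refine tsum_congr fun k => ?_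
    rw [ContinuousLinearMap.apply_apply, ContinuousLinearMap.smul_apply,
      ContinuousLinearMap.sum_apply]
    congr 1
    unfold Dterm
    apply Finset.sum_congr rfl
    intro i hi
    have he : k + 1 - 1 - i = k - i := by omega
    rw [he, ContinuousLinearMap.mul_apply, mulR_pow_apply, mulL_pow_apply, mul_assoc]
  have hsumD : Summable fun n : ℕ => ((n.factorial : ℝ)⁻¹) • Dterm X h n :=
    (summable_norm_D X h).of_norm
  have hshift : ∑' n : ℕ, ((n.factorial : ℝ)⁻¹) • Dterm X h n
      = ∑' k : ℕ, (((k+1).factorial : ℝ)⁻¹) • Dterm X h (k+1) := by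
    rw [hsumD.tsum_eq_zero_add, Dterm_zero]
    simp
  rw [hTapp, ← hshift, exp_eq_tsum ℝ]
  have h1 : Summable fun n : ℕ => ((n.factorial : ℝ)⁻¹) • (X + h) ^ n :=
    expSeries_summable' (𝕂 := ℝ) (X + h)
  have h2 : Summable fun n : ℕ => ((n.factorial : ℝ)⁻¹) • X ^ n :=
    expSeries_summable' (𝕂 := ℝ) X
  rw [← h1.tsum_sub h2, ← (h1.sub h2).tsum_sub hsumD]
  refine tsum_congr fun n => ?_
  unfold Eterm
  rw [smul_sub, smul_sub]

lemma Eterm_fact_norm_le (X h : A) (hh : ‖h‖ ≤ 1) (n : ℕ) :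
    ‖((n.factorial : ℝ)⁻¹) • Eterm X h n‖
      ≤ (max ‖(1:A)‖ 1)^2 * ‖h‖^2 * ((4*(‖X‖+2)) ^ n / n.factorial) := by
  set κ := max ‖(1:A)‖ 1 with hκ
  have hκ1 : (1:ℝ) ≤ κ := le_max_right _ _
  rw [norm_smul, Real.norm_eq_abs, abs_of_nonneg (by positivity)]
  calc ((n.factorial : ℝ))⁻¹ * ‖Eterm X h n‖
      ≤ ((n.factorial : ℝ))⁻¹ * (κ^2 * ((n:ℝ)^2 * (‖X‖ + 2) ^ n) * ‖h‖^2) := by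
        exact mul_le_mul_of_nonneg_left (Eterm_norm X h hh n) (by positivity)
  _ ≤ ((n.factorial : ℝ))⁻¹ * (κ^2 * ((4:ℝ)^n * (‖X‖ + 2) ^ n) * ‖h‖^2) := by
        apply mul_le_mul_of_nonneg_left _ (by positivity)
        apply mul_le_mul_of_nonneg_right _ (by positivity)
        apply mul_le_mul_of_nonneg_left _ (by positivity)
        exact mul_le_mul_of_nonneg_right (sq_cast_le_four_pow n) (by positivity)
  _ = κ^2 * ‖h‖^2 * ((4*(‖X‖+2)) ^ n / n.factorial) := by
        rw [mul_pow]; field_simp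

lemma norm_key_le (X h : A) (hh : ‖h‖ ≤ 1) :
    ‖exp (X + h) - exp X
      - (∑' k : ℕ, (((k+1).factorial : ℝ)⁻¹) •
          ∑ i ∈ range (k+1), ((mul ℝ A X : A →L[ℝ] A)) ^ i * ((mul ℝ A).flip X) ^ (k - i)) h‖
      ≤ ((max ‖(1:A)‖ 1)^2 * Real.exp (4*(‖X‖+2))) * ‖h‖^2 := by
  rw [key_eq]
  have hexp4 : ∑' n : ℕ, ((4*(‖X‖+2)) ^ n / (n.factorial : ℝ)) = Real.exp (4*(‖X‖+2)) := by
    rw [Real.exp_eq_exp_ℝ, exp_eq_tsum_div]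
  calc ‖∑' n : ℕ, ((n.factorial : ℝ)⁻¹) • Eterm X h n‖
      ≤ ∑' n : ℕ, ‖((n.factorial : ℝ)⁻¹) • Eterm X h n‖ :=
        norm_tsum_le_tsum_norm (summable_norm_E X h hh)
  _ ≤ ∑' n : ℕ, (max ‖(1:A)‖ 1)^2 * ‖h‖^2 * ((4*(‖X‖+2)) ^ n / n.factorial) := by
        refine (summable_norm_E X h hh).tsum_le_tsum (fun n => Eterm_fact_norm_le X h hh n) ?_
        exact (Real.summable_pow_div_factorial (4*(‖X‖+2))).mul_left _
  _ = (max ‖(1:A)‖ 1)^2 * ‖h‖^2 * ∑' n : ℕ, ((4*(‖X‖+2)) ^ n / (n.factorial:ℝ)) :=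
        tsum_mul_left
  _ = ((max ‖(1:A)‖ 1)^2 * Real.exp (4*(‖X‖+2))) * ‖h‖^2 := by rw [hexp4]; ring

lemma partA (X : A) :
    HasFDerivAt exp
      (∑' k : ℕ, (((k+1).factorial : ℝ)⁻¹) •
        ∑ i ∈ range (k+1), ((mul ℝ A X : A →L[ℝ] A)) ^ i * ((mul ℝ A).flip X) ^ (k - i)) X := by
  rw [hasFDerivAt_iff_isLittleO_nhds_zero]
  have hO : (fun h : A => exp (X + h) - exp X
      - (∑' k : ℕ, (((k+1).factorial : ℝ)⁻¹) •
          ∑ i ∈ range (k+1), ((mul ℝ A X : A →L[ℝ] A)) ^ i * ((mul ℝ A).flip X) ^ (k - i)) h)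
      =O[nhds 0] fun h => ‖h‖^2 := by
    apply Asymptotics.IsBigO.of_bound ((max ‖(1:A)‖ 1)^2 * Real.exp (4*(‖X‖+2)))
    filter_upwards [Metric.ball_mem_nhds (0:A) one_pos] with h hball
    have hh : ‖h‖ ≤ 1 := by
      rw [Metric.mem_ball, dist_zero_right] at hball
      exact hball.le
    calc ‖exp (X + h) - exp X - _‖
        ≤ ((max ‖(1:A)‖ 1)^2 * Real.exp (4*(‖X‖+2))) * ‖h‖^2 := norm_key_le X h hh
    _ = ((max ‖(1:A)‖ 1)^2 * Real.exp (4*(‖X‖+2))) * ‖‖h‖^2‖ := by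
        rw [Real.norm_eq_abs, abs_of_nonneg (by positivity)]
  exact hO.trans_isLittleO (Asymptotics.isLittleO_norm_pow_id one_lt_two)
end Main

open NormedSpace in
/-- The derivative of the exponential map at `X` is
`T_X exp = L_{exp X} ∘ φ(ad_X)` with `φ(x) = Σ (-1)^n x^n/(n+1)!`. -/
theorem derivative_of_exp {A : Type*} [NormedRing A] [NormedAlgebra ℝ A] [CompleteSpace A]
    (X : A) :
    HasFDerivAt exp
      ((ContinuousLinearMap.mul ℝ A (exp X)).comp
        (∑' n : ℕ, (((-1 : ℝ) ^ n / (Nat.factorial (n + 1) : ℝ)) •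
          (ContinuousLinearMap.mul ℝ A X - (ContinuousLinearMap.mul ℝ A).flip X) ^ n))) X := by
  rw [partB X]
  exact partA X
end

section
/- The Jacobian of the exponential map of a Lie group G with respect to a left-invariant Haar measure dm on G and the corresponding Lebesgue measure dX on 𝔤 equals |det φ(ad_X)|, where φ(x) = (1−e^{−x})/x. -/
set_option linter.unusedSectionVars false
set_option linter.unnecessarySimpa false
set_option linter.deprecated false
set_option linter.unreachableTactic false
set_option linter.unusedTactic false
set_option linter.unnecessarySeqFocus false
set_option maxHeartbeats 1000000

open NormedSpace

namespace JacExp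

open Finset Nat


variable {B : Type*} [NormedRing B] [NormedAlgebra ℝ B] [CompleteSpace B]

noncomputable def ratAlg : NormedAlgebra ℚ B := .restrictScalars ℚ ℝ B

attribute [local instance] ratAlg

/-- `S x y n = ∑_{i+j=n} x^i y^j`. -/
noncomputable def S (x y : B) (n : ℕ) : B := ∑ i ∈ Finset.range (n + 1), x ^ i * y ^ (n - i)

lemma S_zero (x y : B) : S x y 0 = 1 := by simp [S]

lemma S_succ (x y : B) (n : ℕ) : S x y (n + 1) = x * S x y n + y ^ (n + 1) := by
  rw [S, Finset.sum_range_succ' (fun i => x ^ i * y ^ (n + 1 - i)) (n + 1)]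
  simp only [Nat.succ_sub_succ_eq_sub, pow_zero, one_mul, Nat.sub_zero]
  rw [S, Finset.mul_sum]
  congr 1
  refine Finset.sum_congr rfl fun i hi => ?_
  rw [_root_.pow_succ', mul_assoc]

lemma norm_pow_le_aux (x : B) {M : ℝ} (h1 : 1 ≤ M) (hx : ‖x‖ ≤ M) (i : ℕ) :
    ‖x ^ i‖ ≤ (1 + ‖(1 : B)‖) * M ^ i := by
  have hM0 : (0 : ℝ) ≤ M := zero_le_one.trans h1
  have h1M : (1 : ℝ) ≤ M ^ i := one_le_pow₀ h1
  cases i with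
  | zero => simpa using by nlinarith [norm_nonneg (1 : B)]
  | succ i =>
    calc ‖x ^ (i + 1)‖ ≤ ‖x‖ ^ (i + 1) := norm_pow_le' x (Nat.succ_pos i)
      _ ≤ M ^ (i + 1) := pow_le_pow_left₀ (norm_nonneg x) hx _
      _ ≤ (1 + ‖(1 : B)‖) * M ^ (i + 1) := by
          nlinarith [norm_nonneg (1 : B), pow_nonneg hM0 (i + 1)]

lemma norm_S_le (x y : B) (n : ℕ) :
    ‖S x y n‖ ≤ (n + 1) * ((1 + ‖(1 : B)‖) ^ 2 * (1 + ‖x‖ + ‖y‖) ^ n) := by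
  set M : ℝ := 1 + ‖x‖ + ‖y‖ with hM
  have h1 : 1 ≤ M := by simp only [hM]; linarith [norm_nonneg x, norm_nonneg y]
  have hM0 : (0 : ℝ) ≤ M := zero_le_one.trans h1
  calc ‖S x y n‖ ≤ ∑ i ∈ Finset.range (n + 1), ‖x ^ i * y ^ (n - i)‖ := norm_sum_le _ _
    _ ≤ ∑ _i ∈ Finset.range (n + 1), (1 + ‖(1 : B)‖) ^ 2 * M ^ n := by
        refine Finset.sum_le_sum fun i hi => ?_
        have hi' : i ≤ n := Nat.lt_succ_iff.mp (Finset.mem_range.mp hi)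
        calc ‖x ^ i * y ^ (n - i)‖ ≤ ‖x ^ i‖ * ‖y ^ (n - i)‖ := norm_mul_le _ _
          _ ≤ ((1 + ‖(1 : B)‖) * M ^ i) * ((1 + ‖(1 : B)‖) * M ^ (n - i)) := by
              refine mul_le_mul ?_ ?_ (norm_nonneg _) ?_
              · exact norm_pow_le_aux x h1 (by simp [hM]; linarith [norm_nonneg y]) i
              · exact norm_pow_le_aux y h1 (by simp [hM]; linarith [norm_nonneg x]) _
              · positivity
          _ = (1 + ‖(1 : B)‖) ^ 2 * (M ^ i * M ^ (n - i)) := by ring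
          _ = (1 + ‖(1 : B)‖) ^ 2 * M ^ n := by
              rw [← pow_add, Nat.add_sub_cancel' hi']
    _ = (n + 1) * ((1 + ‖(1 : B)‖) ^ 2 * M ^ n) := by
        rw [Finset.sum_const, Finset.card_range, nsmul_eq_mul]; push_cast; ring

/-- master bound for the differentiated series terms -/
lemma bound_der (x y : B) {t R : ℝ} (ht : |t| ≤ R) (n : ℕ) :
    ‖(t ^ n / (n ! : ℝ)) • S x y n‖ ≤
      (1 + ‖(1 : B)‖) ^ 2 * (2 * R * (1 + ‖x‖ + ‖y‖)) ^ n / n ! := by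
  have hR : 0 ≤ R := (abs_nonneg t).trans ht
  set M : ℝ := 1 + ‖x‖ + ‖y‖ with hM
  have h1 : 1 ≤ M := by simp only [hM]; linarith [norm_nonneg x, norm_nonneg y]
  have hM0 : (0 : ℝ) ≤ M := zero_le_one.trans h1
  have key : (n + 1 : ℝ) * (|t| ^ n * M ^ n) ≤ (2 * R * M) ^ n := by
    have h2 : (n + 1 : ℝ) ≤ 2 ^ n := by exact_mod_cast Nat.succ_le_of_lt (Nat.lt_two_pow_self (n := n))
    have h3 : |t| ^ n * M ^ n ≤ R ^ n * M ^ n := by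
      have : |t| ^ n ≤ R ^ n := pow_le_pow_left₀ (abs_nonneg t) ht n
      nlinarith [pow_nonneg hM0 n, pow_nonneg (abs_nonneg t) n]
    calc (n + 1 : ℝ) * (|t| ^ n * M ^ n) ≤ 2 ^ n * (R ^ n * M ^ n) := by
          apply mul_le_mul h2 h3 (by positivity) (by positivity)
      _ = (2 * R * M) ^ n := by rw [mul_pow, mul_pow]; ring
  rw [norm_smul, Real.norm_eq_abs, abs_div, abs_pow, Nat.abs_cast]
  calc |t| ^ n / (n ! : ℝ) * ‖S x y n‖
      ≤ |t| ^ n / (n ! : ℝ) * ((n + 1) * ((1 + ‖(1 : B)‖) ^ 2 * M ^ n)) := by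
        apply mul_le_mul_of_nonneg_left (norm_S_le x y n) (by positivity)
    _ = (1 + ‖(1 : B)‖) ^ 2 * ((n + 1 : ℝ) * (|t| ^ n * M ^ n)) / n ! := by ring
    _ ≤ (1 + ‖(1 : B)‖) ^ 2 * (2 * R * M) ^ n / n ! := by gcongr


lemma summable_bound (C q : ℝ) : Summable (fun n : ℕ => C * q ^ n / n !) := by
  simpa [mul_div_assoc] using (Real.summable_pow_div_factorial q).mul_left C

lemma coeff_eq' (n : ℕ) (a : ℝ) :
    (↑(n + 1) * a) / ((n + 1)! : ℝ) = a / (n ! : ℝ) := by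
  have h0 : (n ! : ℝ) ≠ 0 := by exact_mod_cast (Nat.factorial_pos n).ne'
  rw [Nat.factorial_succ]
  push_cast
  field_simp

lemma coeff_eq (n : ℕ) (t : ℝ) :
    (↑(n + 1) * t ^ n) / ((n + 1)! : ℝ) = t ^ n / (n ! : ℝ) := by
  have h0 : (n ! : ℝ) ≠ 0 := by exact_mod_cast (Nat.factorial_pos n).ne'
  rw [Nat.factorial_succ]
  push_cast
  field_simp

lemma bound_U (x y : B) {t R : ℝ} (ht : |t| ≤ R) (n : ℕ) :
    ‖(t ^ (n + 1) / ((n + 1)! : ℝ)) • S x y n‖ ≤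
      R * ((1 + ‖(1 : B)‖) ^ 2 * (2 * R * (1 + ‖x‖ + ‖y‖)) ^ n / n !) := by
  have hR : 0 ≤ R := (abs_nonneg t).trans ht
  have h0 : (n ! : ℝ) ≠ 0 := by exact_mod_cast (Nat.factorial_pos n).ne'
  have hsplit : (t ^ (n + 1) / ((n + 1)! : ℝ)) • S x y n
      = (t / ((n : ℝ) + 1)) • ((t ^ n / (n ! : ℝ)) • S x y n) := by
    rw [smul_smul]
    congr 1
    rw [Nat.factorial_succ]
    push_cast
    field_simp
    ring
  rw [hsplit, norm_smul, Real.norm_eq_abs]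
  have h1 : |t / ((n : ℝ) + 1)| ≤ R := by
    rw [abs_div, abs_of_nonneg (by positivity : (0:ℝ) ≤ (n : ℝ) + 1)]
    calc |t| / ((n : ℝ) + 1) ≤ |t| / 1 := by
          apply div_le_div_of_nonneg_left (abs_nonneg t) one_pos ?_ |>.trans le_rfl
          · linarith [Nat.cast_nonneg (α := ℝ) n]
      _ = |t| := div_one _
      _ ≤ R := ht
  exact mul_le_mul h1 (bound_der x y ht n) (norm_nonneg _) hR

lemma hasDerivAt_U (x y : B) (t : ℝ) :
    HasDerivAt (fun s : ℝ => ∑' n : ℕ, (s ^ (n + 1) / ((n + 1)! : ℝ)) • S x y n)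
      (∑' n : ℕ, (t ^ n / (n ! : ℝ)) • S x y n) t := by
  set R : ℝ := |t| + 1 with hRdef
  refine hasDerivAt_tsum_of_isPreconnected
    (u := fun n : ℕ => (1 + ‖(1 : B)‖) ^ 2 * (2 * R * (1 + ‖x‖ + ‖y‖)) ^ n / n !)
    (t := Metric.ball (0 : ℝ) R) (y₀ := 0)
    (g := fun n s => (s ^ (n + 1) / ((n + 1)! : ℝ)) • S x y n)
    (g' := fun n s => (s ^ n / (n ! : ℝ)) • S x y n)
    (summable_bound _ _) Metric.isOpen_ball (convex_ball 0 R).isPreconnected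
    ?_ ?_ ?_ ?_ ?_
  · intro n s _
    have h := ((hasDerivAt_pow (n + 1) s).div_const ((n + 1)! : ℝ)).smul_const (S x y n)
    simp only [Nat.add_sub_cancel] at h
    rw [show (↑(n + 1) * s ^ n / ((n + 1)! : ℝ)) = s ^ n / (n ! : ℝ) from coeff_eq n s] at h
    exact h
  · intro n s hs
    exact bound_der x y (le_of_lt (by simpa [Real.norm_eq_abs] using mem_ball_zero_iff.mp hs)) n
  · simp [hRdef]; positivity
  · refine Summable.congr summable_zero fun n => ?_
    simp [zero_pow]
  · simp [hRdef]

lemma norm_zpow_term_le (z : B) {t R : ℝ} (ht : |t| ≤ R) (c : ℝ) (hc : |c| ≤ 1) (n : ℕ) :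
    ‖((c * t ^ n) / (n ! : ℝ)) • z ^ n‖ ≤ (1 + ‖(1 : B)‖) * (R * (1 + ‖z‖)) ^ n / n ! := by
  have hR : 0 ≤ R := (abs_nonneg t).trans ht
  have hMz : (1 : ℝ) ≤ 1 + ‖z‖ := by linarith [norm_nonneg z]
  rw [norm_smul, Real.norm_eq_abs, abs_div, abs_mul, abs_pow, Nat.abs_cast]
  calc |c| * |t| ^ n / (n ! : ℝ) * ‖z ^ n‖
      ≤ 1 * R ^ n / (n ! : ℝ) * ((1 + ‖(1 : B)‖) * (1 + ‖z‖) ^ n) := by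
        gcongr <;>
          first
            | exact hc
            | exact ht
            | exact norm_pow_le_aux z hMz (by linarith) n
    _ = (1 + ‖(1 : B)‖) * (R * (1 + ‖z‖)) ^ n / n ! := by rw [mul_pow]; ring

lemma hasDerivAt_W (z : B) (t : ℝ) :
    HasDerivAt (fun s : ℝ => ∑' n : ℕ, (((-1 : ℝ) ^ n * s ^ (n + 1)) / ((n + 1)! : ℝ)) • z ^ n)
      (∑' n : ℕ, (((-1 : ℝ) ^ n * t ^ n) / (n ! : ℝ)) • z ^ n) t := by
  set R : ℝ := |t| + 1 with hRdef
  refine hasDerivAt_tsum_of_isPreconnected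
    (u := fun n : ℕ => (1 + ‖(1 : B)‖) * (R * (1 + ‖z‖)) ^ n / n !)
    (t := Metric.ball (0 : ℝ) R) (y₀ := 0)
    (g := fun n s => (((-1 : ℝ) ^ n * s ^ (n + 1)) / ((n + 1)! : ℝ)) • z ^ n)
    (g' := fun n s => (((-1 : ℝ) ^ n * s ^ n) / (n ! : ℝ)) • z ^ n)
    (summable_bound _ _) Metric.isOpen_ball (convex_ball 0 R).isPreconnected
    ?_ ?_ ?_ ?_ ?_
  · intro n s _
    have h := (((hasDerivAt_pow (n + 1) s).const_mul ((-1 : ℝ) ^ n)).div_const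
      ((n + 1)! : ℝ)).smul_const (z ^ n)
    simp only [Nat.add_sub_cancel] at h
    rw [show ((-1 : ℝ) ^ n * ((↑(n + 1) : ℝ) * s ^ n) / ((n + 1)! : ℝ))
        = ((-1 : ℝ) ^ n * s ^ n) / (n ! : ℝ) by
      rw [show (-1 : ℝ) ^ n * ((↑(n + 1) : ℝ) * s ^ n) = (↑(n + 1) : ℝ) * ((-1:ℝ) ^ n * s ^ n)
        by ring, coeff_eq']] at h
    exact h
  · intro n s hs
    have hs' : |s| ≤ R := le_of_lt (by simpa [Real.norm_eq_abs] using mem_ball_zero_iff.mp hs)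
    exact norm_zpow_term_le z hs' ((-1 : ℝ) ^ n) (by simp) n
  · simp [hRdef]; positivity
  · refine Summable.congr summable_zero fun n => ?_
    simp [zero_pow]
  · simp [hRdef]


lemma summable_A (x y : B) (t : ℝ) : Summable fun n : ℕ => (t ^ n / (n ! : ℝ)) • S x y n :=
  Summable.of_norm_bounded (summable_bound _ _) (fun n => bound_der x y le_rfl n)

lemma summable_U (x y : B) (t : ℝ) :
    Summable fun n : ℕ => (t ^ (n + 1) / ((n + 1)! : ℝ)) • S x y n :=
  Summable.of_norm_bounded
    ((summable_bound ((1 + ‖(1 : B)‖) ^ 2) (2 * |t| * (1 + ‖x‖ + ‖y‖))).mul_left |t|)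
    (fun n => by simpa [mul_div_assoc] using bound_U x y le_rfl n)

lemma summable_expLike (y : B) (t : ℝ) : Summable fun n : ℕ => (t ^ n / (n ! : ℝ)) • y ^ n := by
  refine (expSeries_summable' (𝕂 := ℝ) (t • y)).congr fun n => ?_
  rw [smul_pow, smul_smul, inv_mul_eq_div]

lemma summable_Y (y : B) (t : ℝ) :
    Summable fun n : ℕ => (t ^ (n + 1) / ((n + 1)! : ℝ)) • y ^ (n + 1) :=
  (summable_nat_add_iff 1).mpr (summable_expLike y t)

lemma exp_smul_eq (y : B) (t : ℝ) :
    exp (t • y) = 1 + ∑' n : ℕ, (t ^ (n + 1) / ((n + 1)! : ℝ)) • y ^ (n + 1) := by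
  simp only [exp_eq_tsum ℝ]
  have h1 : ∀ n : ℕ, ((n ! : ℝ))⁻¹ • (t • y) ^ n = (t ^ n / (n ! : ℝ)) • y ^ n := fun n => by
    rw [smul_pow, smul_smul, inv_mul_eq_div]
  rw [tsum_congr h1, Summable.tsum_eq_zero_add (summable_expLike y t)]
  simp

lemma U_deriv_eq (x y : B) (t : ℝ) :
    ∑' n : ℕ, (t ^ n / (n ! : ℝ)) • S x y n
      = x * (∑' n : ℕ, (t ^ (n + 1) / ((n + 1)! : ℝ)) • S x y n) + exp (t • y) := by
  rw [Summable.tsum_eq_zero_add (summable_A x y t)]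
  have hterm : ∀ n : ℕ, (t ^ (n + 1) / ((n + 1)! : ℝ)) • S x y (n + 1)
      = x * ((t ^ (n + 1) / ((n + 1)! : ℝ)) • S x y n)
        + (t ^ (n + 1) / ((n + 1)! : ℝ)) • y ^ (n + 1) := fun n => by
    rw [S_succ, smul_add, mul_smul_comm]
  rw [tsum_congr hterm, Summable.tsum_add ((summable_U x y t).mul_left x) (summable_Y y t),
    (summable_U x y t).tsum_mul_left x, exp_smul_eq y t]
  simp only [pow_zero, Nat.factorial_zero, Nat.cast_one, div_one, one_smul, S_zero]
  abel

lemma tsum_W_eq (z : B) (t : ℝ) :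
    ∑' n : ℕ, (((-1 : ℝ) ^ n * t ^ n) / (n ! : ℝ)) • z ^ n = exp ((-t) • z) := by
  simp only [exp_eq_tsum ℝ]
  refine tsum_congr fun n => ?_
  rw [smul_pow, smul_smul]
  congr 1
  rw [neg_pow]
  ring

lemma U_eq_V (x y : B) (h : Commute x y) (s₀ : ℝ) :
    ∑' n : ℕ, (s₀ ^ (n + 1) / ((n + 1)! : ℝ)) • S x y n
      = exp (s₀ • x)
          * ∑' n : ℕ, (((-1 : ℝ) ^ n * s₀ ^ (n + 1)) / ((n + 1)! : ℝ)) • (x - y) ^ n := by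
  set z := x - y with hz
  set F : ℝ → B := fun s => (∑' n : ℕ, (s ^ (n + 1) / ((n + 1)! : ℝ)) • S x y n)
      - exp (s • x) * ∑' n : ℕ, (((-1 : ℝ) ^ n * s ^ (n + 1)) / ((n + 1)! : ℝ)) • z ^ n
      with hFdef
  have hFder : ∀ s : ℝ, HasDerivAt F (x * F s) s := by
    intro s
    have hu := hasDerivAt_U x y s
    rw [U_deriv_eq x y s] at hu
    have h2 := (hasDerivAt_exp_smul_const (𝕂 := ℝ) x s).mul (hasDerivAt_W z s)
    rw [tsum_W_eq] at h2
    have hxc : exp (s • x) * x = x * exp (s • x) :=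
      ((((Commute.refl x).smul_right s).exp_right)).eq.symm
    have hcomm : Commute (s • x) ((-s) • z) :=
      ((((Commute.refl x).sub_right h).smul_left s)).smul_right (-s)
    have hadd : exp (s • x) * exp ((-s) • z) = exp (s • y) := by
      rw [← exp_add_of_commute hcomm]
      congr 1
      rw [hz]
      module
    have := hu.sub h2
    convert this using 1
    · rfl
    · rfl
    simp only [hFdef]
    rw [hadd, hxc, mul_sub, mul_assoc]
    abel
  have hG : ∀ s : ℝ, HasDerivAt (fun s => exp (s • (-x)) * F s) 0 s := by
    intro s
    have h3 := (hasDerivAt_exp_smul_const (𝕂 := ℝ) (-x) s).mul (hFder s)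
    convert h3 using 1
    · rfl
    rw [mul_assoc, ← mul_add, neg_mul, neg_add_cancel, mul_zero]
  have hconst : ∀ s : ℝ, exp (s • (-x)) * F s = exp ((0 : ℝ) • (-x)) * F 0 :=
    fun s => is_const_of_deriv_eq_zero (fun u => (hG u).differentiableAt)
      (fun u => (hG u).deriv) s 0
  have hF0 : F 0 = 0 := by
    simp only [hFdef]
    simp [zero_pow]
  have hFs : F s₀ = 0 := by
    have h1 := hconst s₀
    rw [hF0, mul_zero] at h1
    have h2 := congrArg (fun b => exp (s₀ • x) * b) h1
    simp only [mul_zero] at h2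
    rw [← mul_assoc,
      ← exp_add_of_commute ((((Commute.refl x).neg_right).smul_left s₀).smul_right s₀)] at h2
    rw [show s₀ • x + s₀ • (-x) = (0 : B) by module, exp_zero, one_mul] at h2
    exact h2
  simp only [hFdef] at hFs
  exact sub_eq_zero.mp hFs

theorem key (x y : B) (h : Commute x y) :
    ∑' n : ℕ, (((n + 1)! : ℝ))⁻¹ • S x y n
      = exp x * ∑' n : ℕ, ((-1 : ℝ) ^ n / ((n + 1)! : ℝ)) • (x - y) ^ n := by
  have h1 := U_eq_V x y h 1
  simpa [one_pow, mul_one, one_div, one_smul] using h1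


/-! ### Part B: derivative of `exp` in a noncommutative Banach algebra -/

/-- candidate derivative of `W ↦ W ^ n` -/
noncomputable def P (n : ℕ) (W : B) : B →L[ℝ] B :=
  ∑ i ∈ Finset.range n,
    (ContinuousLinearMap.mul ℝ B (W ^ i)) * ((ContinuousLinearMap.mul ℝ B).flip (W ^ (n - 1 - i)))

lemma P_apply (n : ℕ) (W Y : B) :
    P n W Y = ∑ i ∈ Finset.range n, W ^ i * (Y * W ^ (n - 1 - i)) := by
  simp [P, ContinuousLinearMap.sum_apply, ContinuousLinearMap.mul_apply,
    ContinuousLinearMap.flip_apply]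

lemma hasFDerivAt_pow' (n : ℕ) (W : B) : HasFDerivAt (fun W : B => W ^ n) (P n W) W := by
  induction n with
  | zero =>
      simpa [P] using (hasFDerivAt_const (1 : B) W)
  | succ n ih =>
      have h := ih.mul' (hasFDerivAt_id W)
      simp only [id_eq] at h
      have heq : ((fun y : B => y ^ n) * id) = fun y : B => y ^ (n + 1) := by
        funext y; simp [← pow_succ]
      rw [heq] at h
      convert h using 1
      · rfl
      ext Y
      rw [P_apply, Finset.sum_range_succ]
      simp only [ContinuousLinearMap.add_apply, ContinuousLinearMap.smul_apply,
        ContinuousLinearMap.id_apply, ContinuousLinearMap.smulRight_apply, smul_eq_mul,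
        Nat.add_sub_cancel, MulOpposite.smul_eq_mul_unop, MulOpposite.unop_op]
      rw [P_apply, Finset.sum_mul]
      rw [Nat.sub_self, pow_zero, mul_one]
      rw [add_comm]
      congr 1
      refine Finset.sum_congr rfl fun i hi => ?_
      have hi' : i < n := Finset.mem_range.mp hi
      have : n - i = (n - 1 - i) + 1 := by omega
      rw [this, _root_.pow_succ]
      rw [mul_assoc, mul_assoc]

lemma opNorm_flip_mul_le (a : B) : ‖(ContinuousLinearMap.mul ℝ B).flip a‖ ≤ ‖a‖ :=
  ContinuousLinearMap.opNorm_le_bound _ (norm_nonneg a) fun b => by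
    simp only [ContinuousLinearMap.flip_apply, ContinuousLinearMap.mul_apply']
    rw [mul_comm (‖a‖)]
    exact norm_mul_le b a

lemma bound_P {W : B} {R : ℝ} (hW : ‖W‖ ≤ R) (hR : 1 ≤ R) (n : ℕ) :
    ‖((n ! : ℝ))⁻¹ • P n W‖ ≤ (1 + ‖(1 : B)‖) ^ 2 * (2 * R) ^ n / n ! := by
  have hR0 : (0 : ℝ) ≤ R := zero_le_one.trans hR
  have hterm : ∀ i ∈ Finset.range n,
      ‖(ContinuousLinearMap.mul ℝ B (W ^ i))
        * ((ContinuousLinearMap.mul ℝ B).flip (W ^ (n - 1 - i)))‖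
      ≤ (1 + ‖(1 : B)‖) ^ 2 * R ^ n := by
    intro i hi
    have hi' : i < n := Finset.mem_range.mp hi
    calc ‖_ * _‖ ≤ ‖ContinuousLinearMap.mul ℝ B (W ^ i)‖
          * ‖(ContinuousLinearMap.mul ℝ B).flip (W ^ (n - 1 - i))‖ := norm_mul_le _ _
      _ ≤ ‖W ^ i‖ * ‖W ^ (n - 1 - i)‖ := by
          apply mul_le_mul (ContinuousLinearMap.opNorm_mul_apply_le ℝ B _)
            (opNorm_flip_mul_le _) (norm_nonneg _) (norm_nonneg _)
      _ ≤ ((1 + ‖(1 : B)‖) * R ^ i) * ((1 + ‖(1 : B)‖) * R ^ (n - 1 - i)) := by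
          apply mul_le_mul (norm_pow_le_aux W hR hW i) (norm_pow_le_aux W hR hW _)
            (norm_nonneg _) (by positivity)
      _ = (1 + ‖(1 : B)‖) ^ 2 * R ^ (i + (n - 1 - i)) := by rw [pow_add]; ring
      _ ≤ (1 + ‖(1 : B)‖) ^ 2 * R ^ n := by
          have : i + (n - 1 - i) ≤ n := by omega
          have h2 := pow_le_pow_right₀ hR this
          nlinarith [norm_nonneg (1 : B), pow_nonneg hR0 (i + (n - 1 - i)), h2]
  have hP : ‖P n W‖ ≤ n * ((1 + ‖(1 : B)‖) ^ 2 * R ^ n) := by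
    calc ‖P n W‖ ≤ ∑ i ∈ Finset.range n, ‖(ContinuousLinearMap.mul ℝ B (W ^ i))
          * ((ContinuousLinearMap.mul ℝ B).flip (W ^ (n - 1 - i)))‖ := norm_sum_le _ _
      _ ≤ ∑ _i ∈ Finset.range n, (1 + ‖(1 : B)‖) ^ 2 * R ^ n := Finset.sum_le_sum hterm
      _ = n * ((1 + ‖(1 : B)‖) ^ 2 * R ^ n) := by
          rw [Finset.sum_const, Finset.card_range, nsmul_eq_mul]
  have hns := norm_smul (α := ℝ) (((n ! : ℝ))⁻¹) (P n W)
  rw [hns, Real.norm_eq_abs, abs_inv, Nat.abs_cast]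
  have hn2 : (n : ℝ) ≤ 2 ^ n := by
    exact_mod_cast Nat.le_of_lt (Nat.lt_two_pow_self (n := n))
  calc ((n ! : ℝ))⁻¹ * ‖P n W‖ ≤ ((n ! : ℝ))⁻¹ * (n * ((1 + ‖(1 : B)‖) ^ 2 * R ^ n)) := by
        apply mul_le_mul_of_nonneg_left hP (by positivity)
    _ = (1 + ‖(1 : B)‖) ^ 2 * ((n : ℝ) * R ^ n) / n ! := by ring
    _ ≤ (1 + ‖(1 : B)‖) ^ 2 * (2 * R) ^ n / n ! := by
        have hle : (n : ℝ) * R ^ n ≤ (2 * R) ^ n := by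
          rw [mul_pow]
          have h1 : (0:ℝ) ≤ R ^ n := by positivity
          nlinarith
        gcongr

theorem hasFDerivAt_exp_eq (X : B) :
    HasFDerivAt (exp : B → B) (∑' n : ℕ, ((n ! : ℝ))⁻¹ • P n X) X := by
  set R : ℝ := ‖X‖ + 1 with hRdef
  have hR1 : 1 ≤ R := by rw [hRdef]; linarith [norm_nonneg X]
  have h := hasFDerivAt_tsum_of_isPreconnected
    (u := fun n : ℕ => (1 + ‖(1 : B)‖) ^ 2 * (2 * R) ^ n / n !)
    (s := Metric.ball (0 : B) R) (x₀ := 0) (x := X)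
    (f := fun (n : ℕ) (W : B) => ((n ! : ℝ))⁻¹ • W ^ n)
    (f' := fun (n : ℕ) (W : B) => ((n ! : ℝ))⁻¹ • P n W)
    (summable_bound _ _) Metric.isOpen_ball (convex_ball _ _).isPreconnected
    (fun n W _ => by have := (hasFDerivAt_pow' n W).const_smul ((n ! : ℝ))⁻¹; exact this)
    (fun n W hW => bound_P (le_of_lt (mem_ball_zero_iff.mp hW)) hR1 n)
    (by simp [hRdef]; positivity)
    (expSeries_summable' (𝕂 := ℝ) (0 : B))
    (by simp [hRdef])
  have hexp : exp = fun W : B => ∑' n : ℕ, ((n ! : ℝ))⁻¹ • W ^ n := exp_eq_tsum ℝ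
  rw [hexp]
  exact h


/-! ### Part C: assembly -/

lemma mul_pow_eq (X : B) (i : ℕ) :
    (ContinuousLinearMap.mul ℝ B X) ^ i = ContinuousLinearMap.mul ℝ B (X ^ i) := by
  induction i with
  | zero => ext Y; simp
  | succ i ih =>
      ext Y
      rw [pow_succ, ih]
      simp [ContinuousLinearMap.mul_apply, ContinuousLinearMap.mul_apply', pow_succ, mul_assoc]

lemma flip_pow_eq (X : B) (j : ℕ) :
    ((ContinuousLinearMap.mul ℝ B).flip X) ^ j = (ContinuousLinearMap.mul ℝ B).flip (X ^ j) := by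
  induction j with
  | zero => ext Y; simp
  | succ j ih =>
      ext Y
      rw [pow_succ, ih]
      simp [ContinuousLinearMap.mul_apply, ContinuousLinearMap.mul_apply',
        ContinuousLinearMap.flip_apply, _root_.pow_succ', mul_assoc]

lemma P_succ_eq (X : B) (n : ℕ) :
    P (n + 1) X = S (ContinuousLinearMap.mul ℝ B X) ((ContinuousLinearMap.mul ℝ B).flip X) n := by
  rw [P, S]
  refine Finset.sum_congr rfl fun i hi => ?_
  rw [mul_pow_eq, flip_pow_eq]
  have h : n + 1 - 1 - i = n - i := by omega
  rw [h]

lemma summable_P (X : B) : Summable fun n : ℕ => ((n ! : ℝ))⁻¹ • P n X :=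
  Summable.of_norm_bounded (summable_bound _ _)
    (fun n => bound_P (le_of_lt (lt_add_one _)) (by linarith [norm_nonneg X]) n)

noncomputable def mulAlgHom : B →ₐ[ℝ] (B →L[ℝ] B) where
  toFun a := ContinuousLinearMap.mul ℝ B a
  map_one' := by ext Y; simp
  map_mul' a b := by
    ext Y
    simp [ContinuousLinearMap.mul_apply, ContinuousLinearMap.mul_apply', mul_assoc]
  map_zero' := by ext Y; simp
  map_add' a b := by ext Y; simp [add_mul]
  commutes' c := by
    ext Y
    simp [Algebra.algebraMap_eq_smul_one, smul_mul_assoc]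

lemma mul_exp_eq (X : B) :
    ContinuousLinearMap.mul ℝ B (exp X) = exp (ContinuousLinearMap.mul ℝ B X) :=
  map_exp (mulAlgHom (B := B)) (ContinuousLinearMap.mul ℝ B).continuous X

theorem main_map_eq (X : B) :
    (ContinuousLinearMap.mul ℝ B (Ring.inverse (exp X))).comp (fderiv ℝ (exp : B → B) X)
      = ∑' n : ℕ, (((-1 : ℝ) ^ n / ((n + 1)! : ℝ)) •
          (ContinuousLinearMap.mul ℝ B X - (ContinuousLinearMap.mul ℝ B).flip X) ^ n) := by
  have hcomm : Commute (ContinuousLinearMap.mul ℝ B X) ((ContinuousLinearMap.mul ℝ B).flip X) := by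
    ext Y
    simp [ContinuousLinearMap.mul_apply, ContinuousLinearMap.mul_apply',
      ContinuousLinearMap.flip_apply, mul_assoc]
  have hD : fderiv ℝ (exp : B → B) X = ∑' n : ℕ,
      (((n + 1)! : ℝ))⁻¹ • S (ContinuousLinearMap.mul ℝ B X)
        ((ContinuousLinearMap.mul ℝ B).flip X) n := by
    rw [(hasFDerivAt_exp_eq X).fderiv, Summable.tsum_eq_zero_add (summable_P X)]
    have h0 : P 0 X = (0 : B →L[ℝ] B) := by simp [P]
    have h1 : ((0! : ℝ))⁻¹ • (0 : B →L[ℝ] B) = 0 := by ext Y; simp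
    rw [h0, h1, zero_add]
    exact tsum_congr fun n => by rw [P_succ_eq]
  rw [hD, key _ _ hcomm, Ring.inverse_exp, mul_exp_eq (-X), map_neg,
    ← ContinuousLinearMap.mul_def, ← mul_assoc,
    ← exp_add_of_commute (Commute.refl (ContinuousLinearMap.mul ℝ B X)).neg_left,
    neg_add_cancel, exp_zero, one_mul]

end JacExp



open JacExp in
/-- The Jacobian of the exponential map relative to a left-invariant measure:
composing the derivative of `exp` at `X` with left translation by `(exp X)⁻¹`
yields a linear map whose determinant has absolute value `|det φ(ad_X)|`,
where `φ(x) = (1 − e^{−x})/x = Σ (-1)^n x^n/(n+1)!`. -/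
theorem jacobian_of_exp {A : Type*} [NormedRing A] [NormedAlgebra ℝ A]
    [FiniteDimensional ℝ A] (X : A) :
    |LinearMap.det
        (((ContinuousLinearMap.mul ℝ A (Ring.inverse (exp X))).comp
          (fderiv ℝ (exp : A → A) X) : A →L[ℝ] A) : A →ₗ[ℝ] A)| =
    |LinearMap.det
        ((∑' n : ℕ, (((-1 : ℝ) ^ n / (Nat.factorial (n + 1) : ℝ)) •
          (ContinuousLinearMap.mul ℝ A X - (ContinuousLinearMap.mul ℝ A).flip X) ^ n :
            A →L[ℝ] A) : A →L[ℝ] A) : A →ₗ[ℝ] A)| := by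
  rw [main_map_eq X]
end

section
/- The exponential map exp : 𝔰𝔲(2) → SU(2) restricts to a bijection from the open ball 𝒪 = {X ∈ 𝔰𝔲(2) : ‖X‖ < 2π} onto SU(2) \ {−I}, where ‖X‖ = 2√(det X). -/
open Matrix NormedSpace

noncomputable section SU2Aux

/-- The general element of `𝔰𝔲(2)`. -/
def m2 (a : ℝ) (β : ℂ) : Matrix (Fin 2) (Fin 2) ℂ :=
  !![(a:ℂ)*Complex.I, β; -((starRingEnd ℂ) β), -((a:ℂ)*Complex.I)]

theorem su2_struct {X : Matrix (Fin 2) (Fin 2) ℂ} (h1 : Xᴴ = -X) (h2 : X.trace = 0) :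
    X = m2 (X 0 0).im (X 0 1) := by
  have hc : ∀ i j, (starRingEnd ℂ) (X j i) = -X i j := by
    intro i j
    have := congrFun (congrFun h1 i) j
    simpa [Matrix.conjTranspose_apply] using this
  have htr : X 0 0 + X 1 1 = 0 := by simpa [Matrix.trace_fin_two] using h2
  have h00 : X 0 0 = ((X 0 0).im : ℂ) * Complex.I := by
    have := hc 0 0
    have hre : (X 0 0).re = 0 := by
      have := congrArg Complex.re this
      simp at this; linarith
    apply Complex.ext <;> simp [hre]
  ext i j
  fin_cases i <;> fin_cases j <;>
    simp [m2, Matrix.cons_val_zero, Matrix.cons_val_one]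
  · exact h00
  · linear_combination (hc 1 0)
  · have := htr; rw [h00] at this; linear_combination this

theorem m2_mul_m2 (a : ℝ) (β : ℂ) :
    m2 a β * m2 a β = -(((a^2 + Complex.normSq β : ℝ) : ℂ)) • 1 := by
  ext i j
  fin_cases i <;> fin_cases j <;>
    simp [m2, Matrix.mul_fin_two, Matrix.one_fin_two, Complex.normSq_apply, Complex.ext_iff] <;>
    ring_nf <;> simp [Complex.ext_iff, ← Complex.ofReal_pow] <;> ring

theorem m2_det (a : ℝ) (β : ℂ) :
    (m2 a β).det = ((a^2 + Complex.normSq β : ℝ) : ℂ) := by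
  simp [m2, Matrix.det_fin_two_of, Complex.normSq_apply, Complex.ext_iff,
    ← Complex.ofReal_pow]
  constructor <;> ring

theorem m2_conjTranspose (a : ℝ) (β : ℂ) : (m2 a β)ᴴ = -(m2 a β) := by
  ext i j
  fin_cases i <;> fin_cases j <;> simp [m2, Complex.ext_iff]

theorem m2_trace (a : ℝ) (β : ℂ) : (m2 a β).trace = 0 := by
  simp [m2, Matrix.trace_fin_two]

theorem m2_smul (c a : ℝ) (β : ℂ) : (c:ℂ) • m2 a β = m2 (c*a) ((c:ℂ)*β) := by
  ext i j
  fin_cases i <;> fin_cases j <;> simp [m2, Complex.ext_iff] <;> ring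

theorem m2_eq_zero {a : ℝ} {β : ℂ} (h : a^2 + Complex.normSq β = 0) : m2 a β = 0 := by
  have ha : a = 0 := by nlinarith [Complex.normSq_nonneg β, sq_nonneg a]
  have hb : β = 0 := by
    have : Complex.normSq β = 0 := by nlinarith [sq_nonneg a]
    exact Complex.normSq_eq_zero.mp this
  ext i j
  fin_cases i <;> fin_cases j <;> simp [m2, ha, hb]

/-- The ring homomorphism `ℂ → M₂(ℂ)` determined by a square root of `-1`. -/
def phiJ (J : Matrix (Fin 2) (Fin 2) ℂ) (hJ : J * J = -1) : ℂ →+* Matrix (Fin 2) (Fin 2) ℂ where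
  toFun z := (z.re : ℂ) • 1 + (z.im : ℂ) • J
  map_one' := by simp
  map_mul' z w := by
    simp only [Complex.mul_re, Complex.mul_im]
    push_cast
    rw [add_mul, mul_add, mul_add]
    simp only [smul_mul_smul_comm, one_mul, mul_one, hJ, smul_neg, smul_smul]
    push_cast
    module
  map_zero' := by simp
  map_add' z w := by
    simp only [Complex.add_re, Complex.add_im]
    push_cast
    simp only [add_smul]
    abel

theorem exp_smul_J (J : Matrix (Fin 2) (Fin 2) ℂ) (hJ : J * J = -1) (r : ℝ) :
    exp ((r : ℂ) • J) = (Real.cos r : ℂ) • 1 + (Real.sin r : ℂ) • J := by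
  have hcont : Continuous (phiJ J hJ) := by
    simp only [phiJ, RingHom.coe_mk, MonoidHom.coe_mk, OneHom.coe_mk]
    fun_prop
  have h1 : ((r : ℂ) • J) = phiJ J hJ (r * Complex.I) := by
    simp [phiJ]
  have hm : exp (phiJ J hJ (↑r * Complex.I)) = phiJ J hJ (exp (↑r * Complex.I)) := by
    letI : SeminormedRing (Matrix (Fin 2) (Fin 2) ℂ) := Matrix.linftyOpSemiNormedRing
    letI : NormedRing (Matrix (Fin 2) (Fin 2) ℂ) := Matrix.linftyOpNormedRing
    letI : NormedAlgebra ℝ (Matrix (Fin 2) (Fin 2) ℂ) := Matrix.linftyOpNormedAlgebra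
    exact (map_exp (phiJ J hJ) hcont _).symm
  rw [h1, hm,
    ← Complex.exp_eq_exp_ℂ, Complex.exp_mul_I]
  simp [phiJ, Complex.cos_ofReal_re, Complex.sin_ofReal_re, ← Complex.ofReal_cos,
    ← Complex.ofReal_sin]

theorem exp_m2 (a : ℝ) (β : ℂ) (r : ℝ) (hr : r = Real.sqrt (a^2 + Complex.normSq β)) :
    exp (m2 a β) =
      (Real.cos r : ℂ) • 1 + ((Real.sin r / r : ℝ) : ℂ) • m2 a β := by
  have hnn : 0 ≤ a^2 + Complex.normSq β := add_nonneg (sq_nonneg a) (Complex.normSq_nonneg β)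
  have hr2 : r^2 = a^2 + Complex.normSq β := by rw [hr]; exact Real.sq_sqrt hnn
  rcases eq_or_ne r 0 with h0 | h0
  · have hz : a^2 + Complex.normSq β = 0 := by rw [← hr2, h0]; ring
    rw [m2_eq_zero hz, h0]
    simp [exp_zero]
  · set J : Matrix (Fin 2) (Fin 2) ℂ := ((r⁻¹ : ℝ) : ℂ) • m2 a β with hJdef
    have hm : m2 a β = ((r : ℝ) : ℂ) • J := by
      rw [hJdef, smul_smul, ← Complex.ofReal_mul, mul_inv_cancel₀ h0]
      simp
    have hJ : J * J = -1 := by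
      rw [hJdef, smul_mul_smul_comm, m2_mul_m2, smul_smul, ← hr2]
      have hs : (((r⁻¹:ℝ):ℂ) * ((r⁻¹:ℝ):ℂ) * -(((r^2:ℝ)):ℂ)) = -1 := by
        have : (r:ℂ) ≠ 0 := Complex.ofReal_ne_zero.mpr h0
        push_cast
        field_simp
      rw [hs]
      simp
    rw [hm, exp_smul_J J hJ r, hJdef, smul_smul]
    congr 2
    push_cast
    ring

theorem comb_eq (a : ℝ) (β : ℂ) (c d : ℝ) :
    (c:ℂ) • (1 : Matrix (Fin 2) (Fin 2) ℂ) + (d:ℂ) • m2 a β =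
      !![(c:ℂ) + d*a*Complex.I, d*β;
         -((d:ℂ)*(starRingEnd ℂ) β), (c:ℂ) - d*a*Complex.I] := by
  ext i j
  fin_cases i <;> fin_cases j <;>
    simp [m2, Matrix.one_apply, Complex.ext_iff] <;> ring

theorem comb_det (a : ℝ) (β : ℂ) (c d : ℝ)
    (hcd : c^2 + d^2*(a^2 + Complex.normSq β) = 1) :
    ((c:ℂ) • (1 : Matrix (Fin 2) (Fin 2) ℂ) + (d:ℂ) • m2 a β).det = 1 := by
  rw [comb_eq, Matrix.det_fin_two_of]
  simp only [Complex.ext_iff, Complex.normSq_apply] at hcd ⊢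
  constructor
  · simp [Complex.mul_re, Complex.mul_im, Complex.normSq_apply]
    ring_nf
    ring_nf at hcd
    linarith
  · simp [Complex.mul_re, Complex.mul_im]
    ring

theorem comb_mul_star (a : ℝ) (β : ℂ) (c d : ℝ)
    (hcd : c^2 + d^2*(a^2 + Complex.normSq β) = 1) :
    ((c:ℂ) • (1 : Matrix (Fin 2) (Fin 2) ℂ) + (d:ℂ) • m2 a β) *
      star ((c:ℂ) • (1 : Matrix (Fin 2) (Fin 2) ℂ) + (d:ℂ) • m2 a β) = 1 := by
  set M := m2 a β with hM
  have hstar : star ((c:ℂ) • (1 : Matrix (Fin 2) (Fin 2) ℂ) + (d:ℂ) • M)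
      = (c:ℂ) • (1 : Matrix (Fin 2) (Fin 2) ℂ) - (d:ℂ) • M := by
    rw [star_add, star_smul, star_smul, star_one]
    have h1 : star M = -M := m2_conjTranspose a β
    rw [h1]
    simp [sub_eq_add_neg]
  rw [hstar]
  have expand : ((c:ℂ) • (1 : Matrix (Fin 2) (Fin 2) ℂ) + (d:ℂ) • M) *
      ((c:ℂ) • (1 : Matrix (Fin 2) (Fin 2) ℂ) - (d:ℂ) • M)
      = ((c:ℂ)*(c:ℂ)) • (1 : Matrix (Fin 2) (Fin 2) ℂ) - ((d:ℂ)*(d:ℂ)) • (M*M) := by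
    simp only [add_mul, mul_sub, smul_mul_smul_comm, one_mul, mul_one]
    rw [mul_comm (d:ℂ) (c:ℂ)]
    abel
  rw [expand, m2_mul_m2, smul_smul, ← sub_smul]
  have : ((c:ℂ)*(c:ℂ) - (d:ℂ)*(d:ℂ) * -((a^2 + Complex.normSq β : ℝ):ℂ)) = 1 := by
    have hcd' := congrArg (Complex.ofReal) hcd
    push_cast at hcd' ⊢
    linear_combination hcd'
  rw [this, one_smul]

theorem comb_trace (a : ℝ) (β : ℂ) (c d : ℂ) :
    (c • (1 : Matrix (Fin 2) (Fin 2) ℂ) + d • m2 a β).trace = 2*c := by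
  simp [m2, Matrix.trace_fin_two, Matrix.one_apply]
  ring

theorem comb_ne_neg_one (a : ℝ) (β : ℂ) (c d : ℝ) (hc : c ≠ -1) :
    (c:ℂ) • (1 : Matrix (Fin 2) (Fin 2) ℂ) + (d:ℂ) • m2 a β ≠ -1 := by
  intro h
  have := congrFun (congrFun h 0) 0
  simp [m2, Matrix.one_apply, Complex.ext_iff] at this
  exact hc this.1

theorem su2_group_struct {U : Matrix (Fin 2) (Fin 2) ℂ}
    (hU : U ∈ Matrix.unitaryGroup (Fin 2) ℂ) (hdet : U.det = 1) :
    U 1 1 = (starRingEnd ℂ) (U 0 0) ∧ U 1 0 = -((starRingEnd ℂ) (U 0 1)) ∧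
      U 0 0 * (starRingEnd ℂ) (U 0 0) + U 0 1 * (starRingEnd ℂ) (U 0 1) = 1 := by
  have hadj : U * U.adjugate = 1 := by rw [Matrix.mul_adjugate, hdet]; simp
  have h1 : star U * U = 1 := hU.1
  have hstar : star U = U.adjugate := by
    calc star U = star U * (U * U.adjugate) := by rw [hadj, mul_one]
      _ = (star U * U) * U.adjugate := by rw [mul_assoc]
      _ = U.adjugate := by rw [h1, one_mul]
  rw [Matrix.adjugate_fin_two] at hstar
  have he : ∀ i j, (starRingEnd ℂ) (U j i) = !![U 1 1, -U 0 1; -U 1 0, U 0 0] i j := by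
    intro i j
    have := congrFun (congrFun hstar i) j
    simpa [Matrix.conjTranspose_apply] using this
  have e00 := he 0 0
  have e10 := he 1 0
  simp at e00 e10
  refine ⟨e00.symm, ?_, ?_⟩
  · rw [e10, neg_neg]
  · have hd : U 0 0 * U 1 1 - U 0 1 * U 1 0 = 1 := by
      rw [← Matrix.det_fin_two]; exact hdet
    rw [e00, e10]
    linear_combination hd

end SU2Aux

/-- The exponential map restricts to a bijection from the open ball
`𝒪 = {X ∈ 𝔰𝔲(2) : ‖X‖ < 2π}` (where `‖X‖ = 2√(det X)`) onto `SU(2) \ {−I}`. -/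
theorem su2_exp_bijOn :
    Set.BijOn (NormedSpace.exp)
      {X : Matrix (Fin 2) (Fin 2) ℂ |
        Xᴴ = -X ∧ X.trace = 0 ∧ 2 * Real.sqrt (X.det.re) < 2 * Real.pi}
      {U : Matrix (Fin 2) (Fin 2) ℂ |
        U ∈ Matrix.unitaryGroup (Fin 2) ℂ ∧ U.det = 1 ∧ U ≠ -1} := by
  -- preliminary: description of everything for a member of the source set
  have key : ∀ X : Matrix (Fin 2) (Fin 2) ℂ,
      Xᴴ = -X → X.trace = 0 →
      ∃ a : ℝ, ∃ β : ℂ, X = m2 a β ∧ X.det.re = a^2 + Complex.normSq β := by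
    intro X h1 h2
    refine ⟨(X 0 0).im, X 0 1, su2_struct h1 h2, ?_⟩
    have : X.det = (((X 0 0).im^2 + Complex.normSq (X 0 1) : ℝ) : ℂ) := by
      conv_lhs => rw [su2_struct h1 h2]
      exact m2_det _ _
    rw [this]
    exact Complex.ofReal_re _
  constructor
  · -- MapsTo
    rintro X ⟨h1, h2, h3⟩
    obtain ⟨a, β, hXeq, hdetre⟩ := key X h1 h2
    set r := Real.sqrt (a^2 + Complex.normSq β) with hrdef
    have hnn : 0 ≤ a^2 + Complex.normSq β :=
      add_nonneg (sq_nonneg a) (Complex.normSq_nonneg β)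
    have hr2 : r^2 = a^2 + Complex.normSq β := Real.sq_sqrt hnn
    have hrlt : r < Real.pi := by
      rw [hdetre] at h3
      linarith [h3]
    have hrnn : 0 ≤ r := Real.sqrt_nonneg _
    have hexp : exp X = (Real.cos r : ℂ) • 1 + ((Real.sin r / r : ℝ) : ℂ) • m2 a β := by
      rw [hXeq]; exact exp_m2 a β r hrdef
    have hcd : (Real.cos r)^2 + (Real.sin r / r)^2 * (a^2 + Complex.normSq β) = 1 := by
      rw [← hr2]
      rcases eq_or_ne r 0 with h0 | h0
      · simp [h0]
      · have : (Real.sin r / r)^2 * r^2 = (Real.sin r)^2 := by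
          field_simp
        rw [this]
        exact Real.cos_sq_add_sin_sq r
    have hcne : Real.cos r ≠ -1 := by
      have hmem : r ∈ Set.Icc 0 Real.pi := ⟨hrnn, hrlt.le⟩
      have hpimem : Real.pi ∈ Set.Icc 0 Real.pi := ⟨Real.pi_pos.le, le_refl _⟩
      have := Real.strictAntiOn_cos hmem hpimem hrlt
      rw [Real.cos_pi] at this
      linarith
    refine ⟨?_, ?_, ?_⟩
    · rw [Matrix.mem_unitaryGroup_iff, hexp]
      exact comb_mul_star a β _ _ hcd
    · rw [hexp]; exact comb_det a β _ _ hcd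
    · rw [hexp]; exact comb_ne_neg_one a β _ _ hcne
  constructor
  · -- InjOn
    rintro X ⟨hX1, hX2, hX3⟩ Y ⟨hY1, hY2, hY3⟩ hexp_eq
    obtain ⟨a, β, hXeq, hXdetre⟩ := key X hX1 hX2
    obtain ⟨a', β', hYeq, hYdetre⟩ := key Y hY1 hY2
    set rX := Real.sqrt (a^2 + Complex.normSq β) with hrXdef
    set rY := Real.sqrt (a'^2 + Complex.normSq β') with hrYdef
    have hXexp : exp X = (Real.cos rX : ℂ) • 1 + ((Real.sin rX / rX : ℝ) : ℂ) • m2 a β := by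
      rw [hXeq]; exact exp_m2 a β rX hrXdef
    have hYexp : exp Y = (Real.cos rY : ℂ) • 1 + ((Real.sin rY / rY : ℝ) : ℂ) • m2 a' β' := by
      rw [hYeq]; exact exp_m2 a' β' rY hrYdef
    have hXlt : rX < Real.pi := by rw [hXdetre] at hX3; linarith
    have hYlt : rY < Real.pi := by rw [hYdetre] at hY3; linarith
    have hXnn : 0 ≤ rX := Real.sqrt_nonneg _
    have hYnn : 0 ≤ rY := Real.sqrt_nonneg _
    -- traces give cos rX = cos rY
    have htr : (2 * (Real.cos rX : ℂ)) = 2 * (Real.cos rY : ℂ) := by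
      have := congrArg Matrix.trace hexp_eq
      rwa [hXexp, hYexp, comb_trace, comb_trace] at this
    have hcos : Real.cos rX = Real.cos rY := by
      have : (Real.cos rX : ℂ) = (Real.cos rY : ℂ) := by linear_combination htr / 2
      exact_mod_cast this
    have hreq : rX = rY :=
      Real.injOn_cos ⟨hXnn, hXlt.le⟩ ⟨hYnn, hYlt.le⟩ hcos
    rcases eq_or_ne rX 0 with h0 | h0
    · -- both are zero
      have hXz : a^2 + Complex.normSq β = 0 := by
        have h0' : Real.sqrt (a^2 + Complex.normSq β) = 0 := by rw [← hrXdef]; exact h0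
        have hle := Real.sqrt_eq_zero'.mp h0'
        linarith [add_nonneg (sq_nonneg a) (Complex.normSq_nonneg β)]
      have hYz : a'^2 + Complex.normSq β' = 0 := by
        have h0' : rY = 0 := hreq ▸ h0
        have h0'' : Real.sqrt (a'^2 + Complex.normSq β') = 0 := by rw [← hrYdef]; exact h0'
        have hle := Real.sqrt_eq_zero'.mp h0''
        linarith [add_nonneg (sq_nonneg a') (Complex.normSq_nonneg β')]
      rw [hXeq, hYeq, m2_eq_zero hXz, m2_eq_zero hYz]
    · have hrpos : 0 < rX := lt_of_le_of_ne hXnn (Ne.symm h0)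
      have hsinpos : 0 < Real.sin rX := Real.sin_pos_of_pos_of_lt_pi hrpos hXlt
      have hd : ((Real.sin rX / rX : ℝ) : ℂ) ≠ 0 := by
        rw [Complex.ofReal_ne_zero]
        positivity
    -- cancel
      rw [hXexp, hYexp, ← hreq] at hexp_eq
      have := add_left_cancel hexp_eq
      rw [← hXeq, ← hYeq] at this
      exact smul_right_injective _ hd this
  · -- SurjOn
    rintro U ⟨hUu, hUdet, hUne⟩
    obtain ⟨h11, h10, hnorm⟩ := su2_group_struct hUu hUdet
    have hUeq : U = ((U 0 0).re : ℂ) • 1 + ((1:ℝ):ℂ) • m2 (U 0 0).im (U 0 1) := by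
      ext i j
      fin_cases i <;> fin_cases j <;>
        simp [m2, Matrix.one_apply]
      · exact h10
      · rw [h11]; apply Complex.ext <;> simp
    set t := (U 0 0).re with htdef
    set av := (U 0 0).im with havdef
    set b := U 0 1 with hbdef
    have habs : t^2 + av^2 + Complex.normSq b = 1 := by
      have : Complex.normSq (U 0 0) + Complex.normSq b = 1 := by
        have h := hnorm
        rw [Complex.mul_conj, Complex.mul_conj] at h
        exact_mod_cast h
      rw [Complex.normSq_apply] at this
      simp only [htdef, havdef]
      nlinarith [this]
    have ht1 : t ≤ 1 := by nlinarith [sq_nonneg av, Complex.normSq_nonneg b]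
    have ht2 : -1 ≤ t := by nlinarith [sq_nonneg av, Complex.normSq_nonneg b]
    have htne : t ≠ -1 := by
      intro h
      apply hUne
      have hav : av = 0 := by nlinarith [Complex.normSq_nonneg b, sq_nonneg av]
      have hb0 : b = 0 := by
        apply Complex.normSq_eq_zero.mp
        nlinarith [Complex.normSq_nonneg b, sq_nonneg av]
      rw [hUeq, hav, hb0, h, m2_eq_zero (by norm_num : (0:ℝ)^2 + Complex.normSq 0 = 0)]
      push_cast
      simp
    rcases eq_or_ne t 1 with h1 | h1
    · -- U = 1, take X = 0
      refine ⟨0, ⟨by simp, by simp, by simpa using Real.pi_pos⟩, ?_⟩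
      have hav : av = 0 := by nlinarith [Complex.normSq_nonneg b, sq_nonneg av]
      have hb0 : b = 0 := by
        apply Complex.normSq_eq_zero.mp
        nlinarith [Complex.normSq_nonneg b, sq_nonneg av]
      rw [exp_zero, hUeq, hav, hb0, h1,
        m2_eq_zero (by norm_num : (0:ℝ)^2 + Complex.normSq 0 = 0)]
      push_cast
      simp
    · have htlt : t < 1 := lt_of_le_of_ne ht1 h1
      have htgt : -1 < t := lt_of_le_of_ne ht2 (Ne.symm htne)
      set r := Real.arccos t with hrdef
      have hcos : Real.cos r = t := Real.cos_arccos ht2 ht1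
      have hrpos : 0 < r := Real.arccos_pos.mpr htlt
      have hrlt : r < Real.pi := by
        refine lt_of_le_of_ne (Real.arccos_le_pi t) (fun h => htne ?_)
        rw [← hcos, h, Real.cos_pi]
      have hsin : Real.sin r = Real.sqrt (1 - t^2) := Real.sin_arccos t
      have hsinpos : 0 < Real.sin r := Real.sin_pos_of_pos_of_lt_pi hrpos hrlt
      have hsin2 : (Real.sin r)^2 = 1 - t^2 := by
        rw [hsin]
        exact Real.sq_sqrt (by nlinarith)
      set d := r / Real.sin r with hddef
      have hdpos : 0 < d := div_pos hrpos hsinpos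
      refine ⟨m2 (d * av) ((d:ℂ) * b), ⟨m2_conjTranspose _ _, m2_trace _ _, ?_⟩, ?_⟩
      · -- norm condition
        have hdet : (m2 (d * av) ((d:ℂ) * b)).det.re
            = (d*av)^2 + Complex.normSq ((d:ℂ)*b) := by
          rw [m2_det]; exact Complex.ofReal_re _
        have h2 : av^2 + Complex.normSq b = 1 - t^2 := by linarith
        have e : d * d * (Real.sin r)^2 = r^2 := by
          rw [hddef]; field_simp
        have hval : (d*av)^2 + Complex.normSq ((d:ℂ)*b) = r^2 := by
          rw [Complex.normSq_mul, Complex.normSq_ofReal]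
          linear_combination (d*d) * h2 + e - (d*d) * hsin2
        rw [hdet, hval, Real.sqrt_sq hrpos.le]
        linarith
      · -- exp equals U
        have h2 : av^2 + Complex.normSq b = 1 - t^2 := by linarith
        have e : d * d * (Real.sin r)^2 = r^2 := by
          rw [hddef]; field_simp
        have hval : (d*av)^2 + Complex.normSq ((d:ℂ)*b) = r^2 := by
          rw [Complex.normSq_mul, Complex.normSq_ofReal]
          linear_combination (d*d) * h2 + e - (d*d) * hsin2
        have hrr : r = Real.sqrt ((d*av)^2 + Complex.normSq ((d:ℂ)*b)) := by
          rw [hval, Real.sqrt_sq hrpos.le]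
        have hc1 : Real.sin r / r * d = 1 := by
          rw [hddef]
          field_simp
        rw [exp_m2 _ _ r hrr, hcos, hUeq, m2_smul, m2_smul]
        congr 2
        rw [← mul_assoc, hc1]
        rw [← mul_assoc, ← Complex.ofReal_mul, hc1]
end
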